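/- Let l ≥ 1, let C = {Y ∈ ℝ^l : y₁ > 0, q(Y) > 0} with q(Y) = y₁² − y₂² − ⋯ − y_l², and define φ : (0,∞) × ℝ^{l−1} → C by φ(r, y₂, …, y_l) = √r · (√(1 + y₂² + ⋯ + y_l²), y₂, …, y_l). Then φ is a diffeomorphism onto C, with inverse Y ↦ (q(Y), y₂/√(q(Y)), …, y_l/√(q(Y))), and for every integrable f : C → ℂ one has ∫_C f(Y) dY = ∫_{ℝ^{l−1}} ∫_0^∞ r^{l/2} · f(φ(r, y₂, …, y_l)) · (dr/r) · |det φ'(1, y₂, …, y_l)| dy₂ ⋯ dy_l. -/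

import Mathlib

open MeasureTheory

/-- `q(Y) = y₁² - y₂² - ⋯ - y_l²`, with `l = n + 1`. -/
def qf (n : ℕ) (Y : Fin (n + 1) → ℝ) : ℝ := Y 0 ^ 2 - ∑ i : Fin n, Y i.succ ^ 2

/-- The positive cone `C = {Y : y₁ > 0, q(Y) > 0}`. -/
def posCone (n : ℕ) : Set (Fin (n + 1) → ℝ) := {Y | 0 < Y 0 ∧ 0 < qf n Y}

/-- The map `φ(r, y₂, …, y_l) = √r (√(1 + y₂² + ⋯ + y_l²), y₂, …, y_l)`, written as a
self-map of `ℝ^l` with `r` the first coordinate. -/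
noncomputable def phiMap (n : ℕ) (u : Fin (n + 1) → ℝ) : Fin (n + 1) → ℝ :=
  Real.sqrt (u 0) •
    Fin.cons (α := fun _ : Fin (n + 1) => ℝ)
      (Real.sqrt (1 + ∑ i : Fin n, (u i.succ) ^ 2)) (fun i => u i.succ)

namespace Stmt17

lemma phiMap_zero (n : ℕ) (u : Fin (n + 1) → ℝ) :
    phiMap n u 0 = Real.sqrt (u 0) * Real.sqrt (1 + ∑ i : Fin n, (u i.succ) ^ 2) := by
  simp [phiMap]

lemma phiMap_succ (n : ℕ) (u : Fin (n + 1) → ℝ) (i : Fin n) :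
    phiMap n u i.succ = Real.sqrt (u 0) * u i.succ := by
  simp [phiMap]

lemma sum_sq_nonneg (n : ℕ) (u : Fin (n + 1) → ℝ) :
    (0:ℝ) ≤ ∑ i : Fin n, (u i.succ) ^ 2 :=
  Finset.sum_nonneg fun i _ => sq_nonneg _

lemma one_add_pos (n : ℕ) (u : Fin (n + 1) → ℝ) :
    (0:ℝ) < 1 + ∑ i : Fin n, (u i.succ) ^ 2 := by
  have := sum_sq_nonneg n u; linarith

lemma qf_phiMap (n : ℕ) (u : Fin (n + 1) → ℝ) (hu : 0 ≤ u 0) :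
    qf n (phiMap n u) = u 0 := by
  have h1 : (0:ℝ) ≤ 1 + ∑ i : Fin n, (u i.succ) ^ 2 := (one_add_pos n u).le
  simp only [qf, phiMap_zero, phiMap_succ, mul_pow, Real.sq_sqrt hu, Real.sq_sqrt h1,
    ← Finset.mul_sum]
  ring

lemma part1 (n : ℕ) (u : Fin (n + 1) → ℝ) (hu : 0 < u 0) : phiMap n u ∈ posCone n := by
  constructor
  · rw [phiMap_zero]
    exact mul_pos (Real.sqrt_pos.2 hu) (Real.sqrt_pos.2 (one_add_pos n u))
  · rw [qf_phiMap n u hu.le]; exact hu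

lemma part3 (n : ℕ) (u : Fin (n + 1) → ℝ) (hu : 0 < u 0) :
    qf n (phiMap n u) = u 0 ∧
      ∀ i : Fin n, phiMap n u i.succ / Real.sqrt (u 0) = u i.succ := by
  refine ⟨qf_phiMap n u hu.le, fun i => ?_⟩
  rw [phiMap_succ]
  field_simp

lemma part2 (n : ℕ) (Y : Fin (n + 1) → ℝ) (hY : Y ∈ posCone n) :
    phiMap n (Fin.cons (α := fun _ : Fin (n + 1) => ℝ) (qf n Y)
      (fun i => Y i.succ / Real.sqrt (qf n Y))) = Y := by
  obtain ⟨hY0, hq⟩ := hY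
  set t := qf n Y with ht
  have hts : Real.sqrt t > 0 := Real.sqrt_pos.2 hq
  have hsum : (1 : ℝ) + ∑ i : Fin n, (Y i.succ / Real.sqrt t) ^ 2 = Y 0 ^ 2 / t := by
    have : ∀ i : Fin n, (Y i.succ / Real.sqrt t) ^ 2 = Y i.succ ^ 2 / t := by
      intro i; rw [div_pow, Real.sq_sqrt hq.le]
    rw [Finset.sum_congr rfl fun i _ => this i, ← Finset.sum_div]
    field_simp
    have : ∑ i : Fin n, Y i.succ ^ 2 = Y 0 ^ 2 - t := by rw [ht, qf]; ring
    rw [this]; ring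
  funext i
  refine Fin.cases ?_ (fun j => ?_) i
  · rw [phiMap_zero]
    simp only [Fin.cons_zero, Fin.cons_succ]
    rw [hsum, ← Real.sqrt_mul hq.le]
    rw [mul_div_cancel₀ _ (ne_of_gt hq)]
    exact Real.sqrt_sq hY0.le
  · rw [phiMap_succ]
    simp only [Fin.cons_zero, Fin.cons_succ]
    field_simp

end Stmt17

namespace Stmt17

lemma contDiff_inner (n : ℕ) :
    ContDiff ℝ (⊤ : ℕ∞) (fun u : Fin (n + 1) → ℝ => 1 + ∑ i : Fin n, (u i.succ) ^ 2) := by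
  refine contDiff_const.add (ContDiff.sum fun i _ => ?_)
  exact ((ContinuousLinearMap.proj (R := ℝ) (φ := fun _ : Fin (n+1) => ℝ) i.succ).contDiff).pow 2

lemma part4 (n : ℕ) : ContDiffOn ℝ (⊤ : ℕ∞) (phiMap n) {u | 0 < u 0} := by
  intro u hu
  refine ContDiffWithinAt.smul (f := fun u : Fin (n + 1) → ℝ => Real.sqrt (u 0))
    (g := fun u : Fin (n + 1) → ℝ => Fin.cons (α := fun _ : Fin (n + 1) => ℝ)
      (Real.sqrt (1 + ∑ i : Fin n, (u i.succ) ^ 2)) (fun i => u i.succ)) ?_ ?_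
  · have h0 : ContDiffAt ℝ (⊤ : ℕ∞) Real.sqrt (u 0) := Real.contDiffAt_sqrt (ne_of_gt hu)
    exact (h0.comp u
      ((ContinuousLinearMap.proj (R := ℝ) (φ := fun _ : Fin (n+1) => ℝ) 0).contDiff.contDiffAt)).contDiffWithinAt
  · apply ContDiffWithinAt.of_le (m := (⊤ : ℕ∞)) _ le_rfl
    have : ContDiff ℝ (⊤ : ℕ∞) (fun u : Fin (n + 1) → ℝ =>
        Fin.cons (α := fun _ : Fin (n + 1) => ℝ)
          (Real.sqrt (1 + ∑ i : Fin n, (u i.succ) ^ 2)) (fun i => u i.succ)) := by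
      rw [contDiff_pi]
      intro i
      refine Fin.cases ?_ (fun j => ?_) i
      · simp only [Fin.cons_zero]
        rw [contDiff_iff_contDiffAt]
        intro x
        exact (Real.contDiffAt_sqrt (ne_of_gt (one_add_pos n x))).comp x
          (contDiff_inner n).contDiffAt
      · simp only [Fin.cons_succ]
        exact (ContinuousLinearMap.proj (R := ℝ) (φ := fun _ : Fin (n+1) => ℝ) j.succ).contDiff
    exact this.contDiffWithinAt

end Stmt17

namespace Stmt17

/-- Scaling the first coordinate by `r`. -/
noncomputable def Amap (n : ℕ) (r : ℝ) : (Fin (n + 1) → ℝ) →L[ℝ] (Fin (n + 1) → ℝ) :=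
  ContinuousLinearMap.pi fun i =>
    (if i = 0 then r else 1) • ContinuousLinearMap.proj i

lemma Amap_apply (n : ℕ) (r : ℝ) (u : Fin (n + 1) → ℝ) (i : Fin (n + 1)) :
    Amap n r u i = (if i = 0 then r else 1) * u i := by
  simp only [Amap, ContinuousLinearMap.pi_apply]
  by_cases h : i = 0 <;> simp [h]

lemma Amap_det (n : ℕ) (r : ℝ) :
    LinearMap.det ((Amap n r : (Fin (n + 1) → ℝ) →L[ℝ] (Fin (n + 1) → ℝ)) :
      (Fin (n + 1) → ℝ) →ₗ[ℝ] (Fin (n + 1) → ℝ)) = r := by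
  have hM : LinearMap.toMatrix (Pi.basisFun ℝ (Fin (n+1))) (Pi.basisFun ℝ (Fin (n+1)))
      ((Amap n r : (Fin (n + 1) → ℝ) →L[ℝ] (Fin (n + 1) → ℝ)) :
        (Fin (n + 1) → ℝ) →ₗ[ℝ] (Fin (n + 1) → ℝ))
      = Matrix.diagonal (fun i => if i = 0 then r else 1) := by
    ext i j
    rw [LinearMap.toMatrix_apply]
    simp only [Pi.basisFun_apply, Pi.basisFun_repr, ContinuousLinearMap.coe_coe]
    rw [Amap_apply]
    by_cases h : i = j <;> simp [Matrix.diagonal, h, Pi.single_apply]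
  rw [← LinearMap.det_toMatrix (Pi.basisFun ℝ (Fin (n+1))), hM, Matrix.det_diagonal]
  rw [Fin.prod_univ_succ]
  simp [Fin.succ_ne_zero]

lemma Amap_cons (n : ℕ) (r : ℝ) (w : Fin n → ℝ) :
    Amap n r (Fin.cons (α := fun _ : Fin (n + 1) => ℝ) 1 w)
      = Fin.cons (α := fun _ : Fin (n + 1) => ℝ) r w := by
  funext i
  refine Fin.cases ?_ (fun j => ?_) i <;> simp [Amap_apply, Fin.succ_ne_zero]

lemma phiMap_comp_Amap (n : ℕ) (r : ℝ) (hr : 0 ≤ r) (u : Fin (n + 1) → ℝ) :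
    phiMap n (Amap n r u) = Real.sqrt r • phiMap n u := by
  have h0 : Amap n r u 0 = r * u 0 := by simp [Amap_apply]
  have hsucc : ∀ i : Fin n, Amap n r u i.succ = u i.succ := by
    intro i; simp [Amap_apply, Fin.succ_ne_zero]
  funext i
  refine Fin.cases ?_ (fun j => ?_) i
  · rw [phiMap_zero, Pi.smul_apply, phiMap_zero, h0, Real.sqrt_mul hr, smul_eq_mul]
    rw [Finset.sum_congr rfl fun i _ => by rw [hsucc i]]
    ring
  · rw [phiMap_succ, Pi.smul_apply, phiMap_succ, h0, Real.sqrt_mul hr, smul_eq_mul, hsucc]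
    ring

end Stmt17

namespace Stmt17

lemma isOpen_s (n : ℕ) : IsOpen {u : Fin (n + 1) → ℝ | 0 < u 0} :=
  isOpen_lt continuous_const (continuous_apply 0)

lemma hdiff (n : ℕ) (u : Fin (n + 1) → ℝ) (hu : 0 < u 0) :
    DifferentiableAt ℝ (phiMap n) u := by
  have := (part4 n).contDiffAt ((isOpen_s n).mem_nhds hu)
  exact this.differentiableAt (by simp)

lemma hinj (n : ℕ) : Set.InjOn (phiMap n) {u : Fin (n + 1) → ℝ | 0 < u 0} := by
  intro u hu v hv h
  have h0 : u 0 = v 0 := by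
    rw [← qf_phiMap n u (le_of_lt hu), ← qf_phiMap n v (le_of_lt hv), h]
  funext i
  refine Fin.cases h0 (fun j => ?_) i
  have h1 := (part3 n u hu).2 j
  have h2 := (part3 n v hv).2 j
  rw [← h1, ← h2, h, h0]

lemma himg (n : ℕ) : phiMap n '' {u : Fin (n + 1) → ℝ | 0 < u 0} = posCone n := by
  ext Y
  constructor
  · rintro ⟨u, hu, rfl⟩; exact part1 n u hu
  · intro hY
    refine ⟨Fin.cons (α := fun _ : Fin (n + 1) => ℝ) (qf n Y)
      (fun i => Y i.succ / Real.sqrt (qf n Y)), ?_, part2 n Y hY⟩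
    simpa using hY.2

lemma det_scaling (n : ℕ) (r : ℝ) (hr : 0 < r) (w : Fin n → ℝ) :
    |LinearMap.det ((fderiv ℝ (phiMap n) (Fin.cons (α := fun _ : Fin (n + 1) => ℝ) r w) :
        (Fin (n + 1) → ℝ) →L[ℝ] (Fin (n + 1) → ℝ)) :
      (Fin (n + 1) → ℝ) →ₗ[ℝ] (Fin (n + 1) → ℝ))|
    = (r ^ (((n : ℝ) + 1) / 2) / r) *
      |LinearMap.det ((fderiv ℝ (phiMap n) (Fin.cons (α := fun _ : Fin (n + 1) => ℝ) 1 w) :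
          (Fin (n + 1) → ℝ) →L[ℝ] (Fin (n + 1) → ℝ)) :
        (Fin (n + 1) → ℝ) →ₗ[ℝ] (Fin (n + 1) → ℝ))| := by
  set p : Fin (n + 1) → ℝ := Fin.cons (α := fun _ : Fin (n + 1) => ℝ) 1 w with hp
  have hp0 : p 0 = 1 := by simp [hp]
  have hdp : DifferentiableAt ℝ (phiMap n) (Amap n r p) := by
    apply hdiff
    rw [Amap_cons]; simpa using hr
  -- chain rule
  have hcomp : fderiv ℝ (phiMap n ∘ Amap n r) p
      = (fderiv ℝ (phiMap n) (Amap n r p)).comp (Amap n r) := by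
    rw [fderiv_comp p hdp ((Amap n r).differentiableAt), (Amap n r).fderiv]
  have heq : phiMap n ∘ Amap n r = fun u => Real.sqrt r • phiMap n u :=
    funext fun u => phiMap_comp_Amap n r hr.le u
  have hd1 : DifferentiableAt ℝ (phiMap n) p := hdiff n p (by simp [hp0])
  have hsm : fderiv ℝ (phiMap n ∘ Amap n r) p = Real.sqrt r • fderiv ℝ (phiMap n) p := by
    rw [heq]
    exact fderiv_const_smul hd1 (Real.sqrt r)
  have hkey := hcomp.symm.trans hsm
  -- take determinants
  have hdet : LinearMap.det (((fderiv ℝ (phiMap n) (Amap n r p)).comp (Amap n r) :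
        (Fin (n + 1) → ℝ) →L[ℝ] (Fin (n + 1) → ℝ)) :
      (Fin (n + 1) → ℝ) →ₗ[ℝ] (Fin (n + 1) → ℝ))
      = LinearMap.det ((Real.sqrt r • fderiv ℝ (phiMap n) p :
        (Fin (n + 1) → ℝ) →L[ℝ] (Fin (n + 1) → ℝ)) :
      (Fin (n + 1) → ℝ) →ₗ[ℝ] (Fin (n + 1) → ℝ)) := by rw [hkey]
  rw [ContinuousLinearMap.toLinearMap_comp, LinearMap.det_comp, Amap_det] at hdet
  rw [ContinuousLinearMap.toLinearMap_smul, LinearMap.det_smul] at hdet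
  have hrank : Module.finrank ℝ (Fin (n + 1) → ℝ) = n + 1 := by simp
  rw [hrank] at hdet
  rw [Amap_cons] at hdet
  -- hdet : det (D (cons r w)) * r = √r ^ (n+1) * det (D p)
  have hsq : Real.sqrt r ^ (n + 1) = r ^ (((n : ℝ) + 1) / 2) := by
    rw [Real.sqrt_eq_rpow, ← Real.rpow_natCast (r ^ ((1:ℝ)/2)) (n+1),
      ← Real.rpow_mul hr.le]
    norm_num
    ring_nf
  have hr' : (r:ℝ) ≠ 0 := ne_of_gt hr
  have : LinearMap.det ((fderiv ℝ (phiMap n) (Fin.cons (α := fun _ : Fin (n + 1) => ℝ) r w) :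
        (Fin (n + 1) → ℝ) →L[ℝ] (Fin (n + 1) → ℝ)) :
      (Fin (n + 1) → ℝ) →ₗ[ℝ] (Fin (n + 1) → ℝ))
      = (r ^ (((n : ℝ) + 1) / 2) / r) *
        LinearMap.det ((fderiv ℝ (phiMap n) p :
          (Fin (n + 1) → ℝ) →L[ℝ] (Fin (n + 1) → ℝ)) :
        (Fin (n + 1) → ℝ) →ₗ[ℝ] (Fin (n + 1) → ℝ)) := by
    field_simp
    rw [hsq] at hdet
    linear_combination hdet
  rw [this, abs_mul, abs_of_nonneg (by positivity : (0:ℝ) ≤ r ^ (((n : ℝ) + 1) / 2) / r)]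

end Stmt17

namespace Stmt17

lemma part5 (n : ℕ) (f : (Fin (n + 1) → ℝ) → ℂ)
    (hf : IntegrableOn f (posCone n) volume) :
    ∫ Y in posCone n, f Y =
      ∫ w : Fin n → ℝ,
        |LinearMap.det
            ((fderiv ℝ (phiMap n) (Fin.cons (α := fun _ : Fin (n + 1) => ℝ) 1 w) :
                (Fin (n + 1) → ℝ) →L[ℝ] (Fin (n + 1) → ℝ)) :
              (Fin (n + 1) → ℝ) →ₗ[ℝ] (Fin (n + 1) → ℝ))| •
          ∫ r in Set.Ioi (0 : ℝ),
            (r ^ (((n : ℝ) + 1) / 2) / r) •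
              f (phiMap n (Fin.cons (α := fun _ : Fin (n + 1) => ℝ) r w)) := by
  set s : Set (Fin (n + 1) → ℝ) := {u | 0 < u 0} with hs_def
  have hs : MeasurableSet s := (isOpen_s n).measurableSet
  have hF' : ∀ x ∈ s, HasFDerivWithinAt (phiMap n) (fderiv ℝ (phiMap n) x) s x :=
    fun x hx => ((hdiff n x hx).hasFDerivAt).hasFDerivWithinAt
  set F : (Fin (n + 1) → ℝ) → ℂ :=
    fun u => |(fderiv ℝ (phiMap n) u).det| • f (phiMap n u) with hF
  have h1 : ∫ Y in posCone n, f Y = ∫ u in s, F u := by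
    rw [← himg n]
    exact integral_image_eq_integral_abs_det_fderiv_smul volume hs hF' (hinj n) f
  have hFint : IntegrableOn F s volume := by
    rw [← integrableOn_image_iff_integrableOn_abs_det_fderiv_smul volume hs hF' (hinj n) f,
      himg n]
    exact hf
  have hind : Integrable (s.indicator F) volume := (integrable_indicator_iff hs).2 hFint
  set e := MeasurableEquiv.piFinSuccAbove (fun _ : Fin (n + 1) => ℝ) 0 with he
  have mp : MeasurePreserving e.symm volume volume :=
    (volume_preserving_piFinSuccAbove (fun _ : Fin (n + 1) => ℝ) 0).symm
  have hesymm : ∀ (r : ℝ) (w : Fin n → ℝ),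
      e.symm (r, w) = Fin.cons (α := fun _ : Fin (n + 1) => ℝ) r w := by
    intro r w
    simp only [he, MeasurableEquiv.piFinSuccAbove_symm_apply]
    exact Fin.insertNth_zero' r w
  have hGint : Integrable (fun p : ℝ × (Fin n → ℝ) => s.indicator F (e.symm p)) volume :=
    (mp.integrable_comp_emb e.symm.measurableEmbedding).2 hind
  have h2 : ∫ u in s, F u = ∫ p : ℝ × (Fin n → ℝ), s.indicator F (e.symm p) := by
    rw [← integral_indicator hs]
    exact (mp.integral_comp e.symm.measurableEmbedding _).symm
  rw [Measure.volume_eq_prod] at hGint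
  have h3 : ∫ p : ℝ × (Fin n → ℝ), s.indicator F (e.symm p) =
      ∫ w : Fin n → ℝ, ∫ r : ℝ, s.indicator F (e.symm (r, w)) := by
    rw [Measure.volume_eq_prod]
    exact integral_prod_symm _ hGint
  rw [h1, h2, h3]
  refine integral_congr_ae (Filter.Eventually.of_forall fun w => ?_)
  dsimp only
  have hindw : (fun r : ℝ => s.indicator F (e.symm (r, w)))
      = (Set.Ioi (0:ℝ)).indicator
          (fun r => F (Fin.cons (α := fun _ : Fin (n + 1) => ℝ) r w)) := by
    funext r
    rw [hesymm]
    by_cases hr : 0 < r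
    · have hm : Fin.cons (α := fun _ : Fin (n + 1) => ℝ) r w ∈ s := by
        simpa [hs_def] using hr
      rw [Set.indicator_of_mem hm, Set.indicator_of_mem (Set.mem_Ioi.2 hr)]
    · have hm : Fin.cons (α := fun _ : Fin (n + 1) => ℝ) r w ∉ s := by
        simpa [hs_def] using hr
      rw [Set.indicator_of_notMem hm, Set.indicator_of_notMem (fun h => hr (Set.mem_Ioi.1 h))]
  rw [hindw, integral_indicator measurableSet_Ioi]
  have h4 : ∀ r ∈ Set.Ioi (0:ℝ),
      F (Fin.cons (α := fun _ : Fin (n + 1) => ℝ) r w)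
        = |LinearMap.det
            ((fderiv ℝ (phiMap n) (Fin.cons (α := fun _ : Fin (n + 1) => ℝ) 1 w) :
                (Fin (n + 1) → ℝ) →L[ℝ] (Fin (n + 1) → ℝ)) :
              (Fin (n + 1) → ℝ) →ₗ[ℝ] (Fin (n + 1) → ℝ))| •
          ((r ^ (((n : ℝ) + 1) / 2) / r) •
            f (phiMap n (Fin.cons (α := fun _ : Fin (n + 1) => ℝ) r w))) := by
    intro r hr
    rw [hF]
    show |(fderiv ℝ (phiMap n) _).det| • _ = _
    rw [ContinuousLinearMap.det, det_scaling n r hr w, mul_comm, mul_smul]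
  rw [setIntegral_congr_fun measurableSet_Ioi h4, integral_smul]

end Stmt17


/-- `φ` is a diffeomorphism from `(0,∞) × ℝ^{l-1}` onto the cone `C`, with inverse
`Y ↦ (q(Y), y₂/√q(Y), …, y_l/√q(Y))`, and for every integrable `f : C → ℂ`,
`∫_C f(Y) dY = ∫_{ℝ^{l-1}} ∫_0^∞ r^{l/2} f(φ(r,y)) (dr/r) |det φ'(1,y)| dy`. -/
theorem stmt_17 (n : ℕ) :
    (∀ u : Fin (n + 1) → ℝ, 0 < u 0 → phiMap n u ∈ posCone n) ∧
    (∀ Y ∈ posCone n,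
      phiMap n (Fin.cons (α := fun _ : Fin (n + 1) => ℝ) (qf n Y)
        (fun i => Y i.succ / Real.sqrt (qf n Y))) = Y) ∧
    (∀ u : Fin (n + 1) → ℝ, 0 < u 0 →
      qf n (phiMap n u) = u 0 ∧ ∀ i : Fin n, phiMap n u i.succ / Real.sqrt (u 0) = u i.succ) ∧
    ContDiffOn ℝ (⊤ : ℕ∞) (phiMap n) {u | 0 < u 0} ∧
    (∀ f : (Fin (n + 1) → ℝ) → ℂ, IntegrableOn f (posCone n) volume →
      ∫ Y in posCone n, f Y =
        ∫ w : Fin n → ℝ,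
          |LinearMap.det
              ((fderiv ℝ (phiMap n) (Fin.cons (α := fun _ : Fin (n + 1) => ℝ) 1 w) :
                  (Fin (n + 1) → ℝ) →L[ℝ] (Fin (n + 1) → ℝ)) :
                (Fin (n + 1) → ℝ) →ₗ[ℝ] (Fin (n + 1) → ℝ))| •
            ∫ r in Set.Ioi (0 : ℝ),
              (r ^ (((n : ℝ) + 1) / 2) / r) • f (phiMap n (Fin.cons (α := fun _ : Fin (n + 1) => ℝ) r w))) :=
  ⟨Stmt17.part1 n, Stmt17.part2 n, Stmt17.part3 n, Stmt17.part4 n, Stmt17.part5 n⟩
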